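/- Let d ≥ 1 and let M = (M_i)_{i∈I} be a POVM on ℂ^d (a finite family of positive semidefinite d×d complex matrices with ∑_i M_i = 1). Let |p⟩, |q⟩ be unit vectors in ℂ^d such that the diagonal entries of the rank-one projectors |p⟩⟨p| and |q⟩⟨q| coincide (as is the case for tensor products of Pauli X and Y eigenstates), and set δ = |p⟩⟨p| − |q⟩⟨q| ≠ 0. Then the coherence strength satisfies CS^{AC}(M) ≥ TVD(Pr(·|p), Pr(·|q)) / (d · ‖δ‖_HS), where Pr(i|p) = tr(M_i |p⟩⟨p|) and Pr(i|q) = tr(M_i |q⟩⟨q|). -/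

import Mathlib

open scoped BigOperators ComplexOrder

/-- Hilbert–Schmidt (Frobenius) norm of a square complex matrix. -/
noncomputable def hsNorm {n : Type*} [Fintype n] (A : Matrix n n ℂ) : ℝ :=
  Real.sqrt (∑ i, ∑ j, ‖A i j‖ ^ 2)

/-- Total variation distance between two real-valued distributions on a finite set. -/
noncomputable def tvd {I : Type*} [Fintype I] (p q : I → ℝ) : ℝ :=
  (1 / 2) * ∑ i, |p i - q i|

/-- Average-case distance between two POVMs (with the same finite outcome set) on `ℂ^d`. -/
noncomputable def dAV {I : Type*} [Fintype I] {d : ℕ}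
    (M P : I → Matrix (Fin d) (Fin d) ℂ) : ℝ :=
  (1 / (2 * (d : ℝ))) *
    ∑ i, Real.sqrt (hsNorm (M i - P i) ^ 2 + ‖(M i - P i).trace‖ ^ 2)

/-- Rank-one projector `|v⟩⟨v|` onto a vector `v`. -/
noncomputable def proj {d : ℕ} (v : Fin d → ℂ) : Matrix (Fin d) (Fin d) ℂ :=
  Matrix.vecMulVec v (star v)

/-!
Since `δ = |p⟩⟨p| - |q⟩⟨q|` has zero diagonal, `Pr(i|p) - Pr(i|q) = tr(M_i δ)` is unchanged when
`M_i` is replaced by its off-diagonal part `M_i - Φ_dep(M_i)`, so Cauchy–Schwarz for the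
Hilbert–Schmidt inner product bounds it by `‖M_i - Φ_dep(M_i)‖_HS ‖δ‖_HS`. The off-diagonal part
is traceless, so summing over `i` gives `2 TVD ≤ 2d · CS^AC(M) · ‖δ‖_HS`.
-/

open Matrix

section HilbertSchmidt

variable {n : Type*} [Fintype n]

lemma hsNorm_transpose (A : Matrix n n ℂ) : hsNorm Aᵀ = hsNorm A := by
  rw [hsNorm, hsNorm, Finset.sum_comm]
  rfl

lemma hsNorm_pos {A : Matrix n n ℂ} (hA : A ≠ 0) : 0 < hsNorm A := by
  obtain ⟨k, j, hkj⟩ : ∃ k j, A k j ≠ 0 := by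
    by_contra! h
    exact hA (Matrix.ext h)
  rw [hsNorm, Real.sqrt_pos]
  exact Finset.sum_pos' (fun _ _ => Finset.sum_nonneg fun _ _ => by positivity)
    ⟨k, Finset.mem_univ _,
      Finset.sum_pos' (fun _ _ => by positivity) ⟨j, Finset.mem_univ _, by positivity⟩⟩

lemma norm_trace_mul_le_hsNorm_mul_hsNorm (A B : Matrix n n ℂ) :
    ‖(A * B).trace‖ ≤ hsNorm A * hsNorm B := by
  have hsNorm_eq (C : Matrix n n ℂ) : hsNorm C = √(∑ x : n × n, ‖C x.1 x.2‖ ^ 2) := by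
    rw [hsNorm, Fintype.sum_prod_type]
  calc ‖(A * B).trace‖ = ‖∑ x : n × n, A x.1 x.2 * Bᵀ x.1 x.2‖ := by
        simp only [Matrix.trace, Matrix.diag, Matrix.mul_apply, Matrix.transpose_apply,
          Fintype.sum_prod_type]
    _ ≤ ∑ x : n × n, ‖A x.1 x.2‖ * ‖Bᵀ x.1 x.2‖ :=
        (norm_sum_le _ _).trans_eq (by simp only [norm_mul])
    _ ≤ hsNorm A * hsNorm Bᵀ := by
        rw [hsNorm_eq, hsNorm_eq]
        exact Real.sum_mul_le_sqrt_mul_sqrt _ _ _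
    _ = hsNorm A * hsNorm B := by rw [hsNorm_transpose]

end HilbertSchmidt

section Dephasing

variable {n R : Type*} [Fintype n] [DecidableEq n] [Ring R]

lemma trace_sub_diagonal_diag (A : Matrix n n R) : (A - diagonal (diag A)).trace = 0 := by
  rw [trace_sub, trace_diagonal]
  exact sub_self _

lemma trace_mul_eq_trace_sub_diagonal_diag_mul (A : Matrix n n R) {δ : Matrix n n R}
    (hδ : ∀ j, δ j j = 0) : (A * δ).trace = ((A - diagonal (diag A)) * δ).trace := by
  simp [Matrix.sub_mul, Matrix.trace, diagonal_mul, hδ]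

end Dephasing

lemma norm_trace_mul_le_of_diag_eq_zero {n : Type*} [Fintype n] [DecidableEq n]
    (A : Matrix n n ℂ) {δ : Matrix n n ℂ} (hδ : ∀ j, δ j j = 0) :
    ‖(A * δ).trace‖ ≤ hsNorm (A - diagonal (diag A)) * hsNorm δ := by
  rw [trace_mul_eq_trace_sub_diagonal_diag_mul A hδ]
  exact norm_trace_mul_le_hsNorm_mul_hsNorm _ _

lemma dAV_dephase {I : Type*} [Fintype I] {d : ℕ} (M : I → Matrix (Fin d) (Fin d) ℂ) :
    dAV M (fun i => diagonal (diag (M i))) =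
      1 / (2 * (d : ℝ)) * ∑ i, hsNorm (M i - diagonal (diag (M i))) := by
  simp only [dAV, trace_sub_diagonal_diag, norm_zero, zero_pow two_ne_zero, add_zero,
    Real.sqrt_sq (Real.sqrt_nonneg _), hsNorm]

theorem coherence_strength_lower_bound_general
    {I : Type*} [Fintype I] {d : ℕ} (hd : 1 ≤ d)
    (M : I → Matrix (Fin d) (Fin d) ℂ)
    (p q : Fin d → ℂ)
    (hdiag : ∀ j, proj p j j = proj q j j)
    (hδ : proj p - proj q ≠ 0) :
    dAV M (fun i => Matrix.diagonal (Matrix.diag (M i))) ≥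
      tvd (fun i => ((M i * proj p).trace).re) (fun i => ((M i * proj q).trace).re) /
        ((d : ℝ) * hsNorm (proj p - proj q)) := by
  set δ := proj p - proj q
  have hδdiag : ∀ j, δ j j = 0 := fun j => sub_eq_zero.mpr (hdiag j)
  have hδpos : 0 < hsNorm δ := hsNorm_pos hδ
  have hdpos : (0 : ℝ) < d := by exact_mod_cast hd
  have prob_diff_le (i : I) : |((M i * proj p).trace).re - ((M i * proj q).trace).re| ≤
      hsNorm (M i - diagonal (diag (M i))) * hsNorm δ := by
    rw [← Complex.sub_re, ← trace_sub, ← Matrix.mul_sub]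
    exact (Complex.abs_re_le_norm _).trans (norm_trace_mul_le_of_diag_eq_zero _ hδdiag)
  rw [ge_iff_le, div_le_iff₀ (by positivity), dAV_dephase]
  calc tvd (fun i => ((M i * proj p).trace).re) (fun i => ((M i * proj q).trace).re)
      ≤ 1 / 2 * ∑ i, hsNorm (M i - diagonal (diag (M i))) * hsNorm δ := by
        unfold tvd
        gcongr with i
        exact prob_diff_le i
    _ = 1 / (2 * (d : ℝ)) * (∑ i, hsNorm (M i - diagonal (diag (M i)))) * (d * hsNorm δ) := by
        rw [← Finset.sum_mul]
        field_simp

/-- for a POVM `M` on `ℂ^d` and unit vectors `p`, `q` whose rank-one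
projectors have identical diagonals and `δ = |p⟩⟨p| - |q⟩⟨q| ≠ 0`, the coherence strength
`CS^AC(M) = d_AV(M, Φ_dep(M))` is lower bounded by
`TVD(Pr(·|p), Pr(·|q)) / (d ‖δ‖_HS)`. -/
theorem coherence_strength_lower_bound
    {I : Type*} [Fintype I] {d : ℕ} (hd : 1 ≤ d)
    (M : I → Matrix (Fin d) (Fin d) ℂ)
    (hpsd : ∀ i, (M i).PosSemidef) (hsum : ∑ i, M i = 1)
    (p q : Fin d → ℂ)
    (hp : ∑ j, ‖p j‖ ^ 2 = 1) (hq : ∑ j, ‖q j‖ ^ 2 = 1)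
    (hdiag : ∀ j, proj p j j = proj q j j)
    (hδ : proj p - proj q ≠ 0) :
    dAV M (fun i => Matrix.diagonal (Matrix.diag (M i))) ≥
      tvd (fun i => ((M i * proj p).trace).re) (fun i => ((M i * proj q).trace).re) /
        ((d : ℝ) * hsNorm (proj p - proj q)) :=
  coherence_strength_lower_bound_general hd M p q hdiag hδ
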